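/- Construction of k-monogenic functions: Let n ≥ 2, let U ⊆ ℝⁿ be open, let f : U → Cl_n be a smooth left monogenic function, and let k ≥ 1 be an integer. Then D^k( x^{k−1} f(x) ) = 0 on U, where x^{k−1} is the (k−1)-fold Clifford power of the vector x and x^{k−1} f(x) is a Clifford product. -/

import Mathlib

noncomputable section

open MeasureTheory
open scoped BoundedContinuousFunction

/-- Euclidean space `ℝⁿ`. -/
abbrev Ev (n : ℕ) := EuclideanSpace ℝ (Fin n)

/-- The negative-definite quadratic form `x ↦ -‖x‖²` on `ℝⁿ`. -/
def Qn (n : ℕ) : QuadraticForm ℝ (Ev n) :=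
  -(LinearMap.BilinMap.toQuadraticMap (innerₗ (Ev n) : LinearMap.BilinForm ℝ (Ev n)))

/-- The real Clifford algebra `Cl_n`, in which `e_i e_j + e_j e_i = -2 δ_{ij}` and
vectors `x ∈ ℝⁿ` satisfy `x² = -‖x‖²`. -/
abbrev Cl (n : ℕ) := CliffordAlgebra (Qn n)

/-- The embedding of vectors `ℝⁿ ⊆ Cl_n`. -/
def toCl (n : ℕ) (x : Ev n) : Cl n := CliffordAlgebra.ι (Qn n) x

/-- The generators `e_i` of `Cl_n`. -/
def eCl (n : ℕ) (i : Fin n) : Cl n := toCl n (EuclideanSpace.single i 1)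

/-! ### A norm on `Cl n`.
`Cl n` is finite dimensional, so all norms on it are equivalent and induce
the canonical topology; we fix one obtained from a linear embedding into a
space of bounded functions. -/

/-- Index type of a basis of `Cl n`. -/
def ClIdx (n : ℕ) : Type _ := Module.Basis.ofVectorSpaceIndex ℝ (Cl n)

instance (n : ℕ) : TopologicalSpace (ClIdx n) := ⊥
instance (n : ℕ) : DiscreteTopology (ClIdx n) := ⟨rfl⟩

/-- Finitely supported functions embed into bounded continuous functions
(w.r.t. the discrete topology). -/
def finsuppToBCF (ι : Type*) [TopologicalSpace ι] [DiscreteTopology ι] :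
    (ι →₀ ℝ) →ₗ[ℝ] (ι →ᵇ ℝ) where
  toFun f := BoundedContinuousFunction.ofNormedAddCommGroup f continuous_of_discreteTopology
    (∑ a ∈ f.support, ‖f a‖) (by
      intro x
      by_cases hx : x ∈ f.support
      · exact Finset.single_le_sum (fun a _ => norm_nonneg _) hx
      · rw [Finsupp.notMem_support_iff.mp hx]
        simpa using Finset.sum_nonneg (fun a _ => norm_nonneg (f a)))
  map_add' f g := by ext i; simp
  map_smul' c f := by ext i; simp

lemma finsuppToBCF_injective (ι : Type*) [TopologicalSpace ι] [DiscreteTopology ι] :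
    Function.Injective (finsuppToBCF ι) := by
  intro f g h
  ext i
  have := congrFun (congrArg DFunLike.coe h) i
  simpa [finsuppToBCF, BoundedContinuousFunction.coe_ofNormedAddCommGroup] using this

/-- A linear injection of `Cl n` into a normed space. -/
def clEmb (n : ℕ) : Cl n →ₗ[ℝ] (ClIdx n →ᵇ ℝ) :=
  (finsuppToBCF (ClIdx n)).comp (Module.Basis.ofVectorSpace ℝ (Cl n)).repr.toLinearMap

lemma clEmb_injective (n : ℕ) : Function.Injective (clEmb n) :=
  (finsuppToBCF_injective (ClIdx n)).comp (Module.Basis.ofVectorSpace ℝ (Cl n)).repr.injective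

instance (n : ℕ) : NormedAddCommGroup (Cl n) :=
  NormedAddCommGroup.induced (Cl n) (ClIdx n →ᵇ ℝ) (clEmb n) (clEmb_injective n)

instance (n : ℕ) : NormedSpace ℝ (Cl n) :=
  NormedSpace.induced ℝ (Cl n) (ClIdx n →ᵇ ℝ) (clEmb n)

/-! ### The Dirac operator -/

/-- The partial derivative `∂f/∂x_i` of a `Cl_n`-valued function. -/
def pd (n : ℕ) (i : Fin n) (f : Ev n → Cl n) (x : Ev n) : Cl n :=
  fderiv ℝ f x (EuclideanSpace.single i 1)

/-- The Dirac operator `Df = Σᵢ eᵢ ∂f/∂xᵢ`. -/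
def Dirac (n : ℕ) (f : Ev n → Cl n) : Ev n → Cl n :=
  fun x => ∑ i, eCl n i * pd n i f x

/-- The right Dirac operator `fD = Σᵢ (∂f/∂xᵢ) eᵢ`. -/
def DiracR (n : ℕ) (f : Ev n → Cl n) : Ev n → Cl n :=
  fun x => ∑ i, pd n i f x * eCl n i

/-- `f` is left monogenic (left Clifford holomorphic) on `U`: it is `C¹` with `Df = 0` there. -/
def LeftMonogenicOn (n : ℕ) (f : Ev n → Cl n) (U : Set (Ev n)) : Prop :=
  ContDiffOn ℝ 1 f U ∧ ∀ x ∈ U, Dirac n f x = 0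

/-- `g` is right monogenic on `U`: it is `C¹` with `gD = 0` there. -/
def RightMonogenicOn (n : ℕ) (g : Ev n → Cl n) (U : Set (Ev n)) : Prop :=
  ContDiffOn ℝ 1 g U ∧ ∀ x ∈ U, DiracR n g x = 0

noncomputable section
/-! ### Auxiliary development for k_monogenic_construction -/

open scoped ContDiff

open ExteriorAlgebra in
set_option maxHeartbeats 1000000 in
set_option synthInstance.maxHeartbeats 400000 in
theorem km_finiteExterior (E : Type*) [AddCommGroup E] [Module ℝ E] [Module.Finite ℝ E] :
    Module.Finite ℝ (ExteriorAlgebra ℝ E) := by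
  classical
  set d := Module.finrank ℝ E with hd
  rw [Module.finite_def]
  have hvanish : ∀ i : ℕ, d < i → (⋀[ℝ]^i E) = ⊥ := by
    intro i hi
    rw [← ιMulti_span_fixedDegree, Submodule.span_eq_bot]
    rintro x ⟨v, rfl⟩
    apply AlternatingMap.map_linearDependent
    intro hli
    have := hli.fintype_card_le_finrank
    simp [hd] at this
    omega
  have hle : (⊤ : Submodule ℝ (ExteriorAlgebra ℝ E)) ≤ ⨆ i : Fin (d+1), ⋀[ℝ]^(i:ℕ) E := by
    intro x _
    refine DirectSum.Decomposition.inductionOn (fun i : ℕ => ⋀[ℝ]^i E) (Submodule.zero_mem _)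
      (fun {i} m => ?_) (fun a b ha hb => Submodule.add_mem _ ha hb) x
    by_cases hi : i ≤ d
    · exact Submodule.mem_iSup_of_mem ⟨i, by omega⟩ m.2
    · have hb : (m : ExteriorAlgebra ℝ E) ∈ (⊥ : Submodule ℝ (ExteriorAlgebra ℝ E)) :=
        (hvanish i (by omega)) ▸ m.2
      rw [(Submodule.mem_bot ℝ).mp hb]
      exact Submodule.zero_mem _
  have hfg : (⨆ i : Fin (d+1), ⋀[ℝ]^(i:ℕ) E).FG := by
    refine Submodule.fg_iSup _ fun i => Submodule.FG.pow ?_ _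
    rw [← Submodule.map_top]
    exact (Module.finite_def.mp ‹_›).map _
  rw [← top_le_iff.mp hle]; exact hfg

instance km_clFinite (n : ℕ) : Module.Finite ℝ (Cl n) := by
  haveI : Invertible (2 : ℝ) := invertibleOfNonzero two_ne_zero
  haveI := km_finiteExterior (Ev n)
  exact Module.Finite.equiv (CliffordAlgebra.equivExterior (Qn n)).symm

/-- `toCl` as a continuous linear map. -/
def toClL (n : ℕ) : Ev n →L[ℝ] Cl n :=
  LinearMap.toContinuousLinearMap (CliffordAlgebra.ι (Qn n))

lemma toClL_apply (n : ℕ) (x : Ev n) : toClL n x = toCl n x := rfl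

/-- Multiplication in `Cl n` as a continuous bilinear map. -/
def mulL (n : ℕ) : Cl n →L[ℝ] Cl n →L[ℝ] Cl n :=
  LinearMap.toContinuousLinearMap
    { toFun := fun a => LinearMap.toContinuousLinearMap (LinearMap.mulLeft ℝ a)
      map_add' := by intro a b; ext c; simp [add_mul]
      map_smul' := by intro r a; ext c; simp [smul_mul_assoc] }

lemma mulL_apply (n : ℕ) (a b : Cl n) : mulL n a b = a * b := rfl

lemma km_isBBM (n : ℕ) : IsBoundedBilinearMap ℝ (fun p : Cl n × Cl n => p.1 * p.2) :=
  (mulL n).isBoundedBilinearMap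
section PD

variable {n : ℕ}

lemma km_contDiffOn_mul {f g : Ev n → Cl n} {U : Set (Ev n)}
    (hf : ContDiffOn ℝ ∞ f U) (hg : ContDiffOn ℝ ∞ g U) :
    ContDiffOn ℝ ∞ (fun z => f z * g z) U :=
  ((km_isBBM n).contDiff).comp_contDiffOn (hf.prodMk hg)

lemma km_diffAt_mul {f g : Ev n → Cl n} {x : Ev n}
    (hf : DifferentiableAt ℝ f x) (hg : DifferentiableAt ℝ g x) :
    DifferentiableAt ℝ (fun z => f z * g z) x :=
  by have := ((km_isBBM n).differentiableAt (f x, g x)).comp x (hf.prodMk hg); exact this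

lemma pd_congr {U : Set (Ev n)} (hU : IsOpen U) {f g : Ev n → Cl n}
    (h : ∀ y ∈ U, f y = g y) {x : Ev n} (hx : x ∈ U) (i : Fin n) :
    pd n i f x = pd n i g x := by
  have hfg : f =ᶠ[nhds x] g := Filter.eventuallyEq_of_mem (hU.mem_nhds hx) h
  unfold pd
  rw [hfg.fderiv_eq]

lemma pd_clm (A : Ev n →L[ℝ] Cl n) (i : Fin n) (x : Ev n) :
    pd n i (fun z => A z) x = A (EuclideanSpace.single i 1) := by
  unfold pd
  rw [A.fderiv]

lemma pd_const (c : Cl n) (i : Fin n) (x : Ev n) : pd n i (fun _ => c) x = 0 := by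
  unfold pd
  rw [fderiv_const_apply]
  rfl

lemma pd_add {f g : Ev n → Cl n} {x : Ev n} (hf : DifferentiableAt ℝ f x)
    (hg : DifferentiableAt ℝ g x) (i : Fin n) :
    pd n i (fun z => f z + g z) x = pd n i f x + pd n i g x := by
  unfold pd
  rw [fderiv_fun_add hf hg]
  rfl

lemma pd_smul (c : ℝ) {f : Ev n → Cl n} {x : Ev n} (hf : DifferentiableAt ℝ f x) (i : Fin n) :
    pd n i (fun z => c • f z) x = c • pd n i f x := by
  unfold pd
  rw [fderiv_fun_const_smul hf]
  rfl

lemma pd_sum {ι : Type*} (s : Finset ι) {f : ι → Ev n → Cl n} {x : Ev n}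
    (hf : ∀ i ∈ s, DifferentiableAt ℝ (f i) x) (j : Fin n) :
    pd n j (fun z => ∑ i ∈ s, f i z) x = ∑ i ∈ s, pd n j (f i) x := by
  unfold pd
  rw [fderiv_fun_sum hf]
  simp

lemma pd_clm_comp (A : Cl n →L[ℝ] Cl n) {f : Ev n → Cl n} {x : Ev n}
    (hf : DifferentiableAt ℝ f x) (i : Fin n) :
    pd n i (fun z => A (f z)) x = A (pd n i f x) := by
  have h' : HasFDerivAt (fun z => A (f z)) (A.comp (fderiv ℝ f x)) x :=
    (A.hasFDerivAt (x := f x)).comp x hf.hasFDerivAt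
  unfold pd
  rw [h'.fderiv]
  rfl

lemma pd_mul {f g : Ev n → Cl n} {x : Ev n} (hf : DifferentiableAt ℝ f x)
    (hg : DifferentiableAt ℝ g x) (i : Fin n) :
    pd n i (fun z => f z * g z) x = pd n i f x * g x + f x * pd n i g x := by
  have h : HasFDerivAt (fun z => f z * g z)
      (((km_isBBM n).deriv (f x, g x)).comp ((fderiv ℝ f x).prod (fderiv ℝ g x))) x :=
    by have := ((km_isBBM n).hasFDerivAt (f x, g x)).comp x (hf.hasFDerivAt.prodMk hg.hasFDerivAt); exact this
  unfold pd
  rw [h.fderiv]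
  simp [IsBoundedBilinearMap.deriv_apply, add_comm]

lemma pd_coord_smul (j : Fin n) {g : Ev n → Cl n} {x : Ev n}
    (hg : DifferentiableAt ℝ g x) (i : Fin n) :
    pd n i (fun z => z j • g z) x
      = ((EuclideanSpace.single i (1:ℝ)) j) • g x + x j • pd n i g x := by
  have hc : DifferentiableAt ℝ (fun z : Ev n => z j) x :=
    (EuclideanSpace.proj (𝕜 := ℝ) j).differentiableAt
  unfold pd
  rw [fderiv_fun_smul hc hg]
  have : fderiv ℝ (fun z : Ev n => z j) x = EuclideanSpace.proj (𝕜 := ℝ) j :=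
    (EuclideanSpace.proj (𝕜 := ℝ) j).fderiv
  simp [this, add_comm]

end PD

section Smooth

variable {n : ℕ} {U : Set (Ev n)}

/-- The Euler operator `Ef = Σᵢ xᵢ ∂f/∂xᵢ`. -/
def Eu (n : ℕ) (f : Ev n → Cl n) (x : Ev n) : Cl n := ∑ i, x i • pd n i f x

lemma sOn_diffAt {F : Type*} [NormedAddCommGroup F] [NormedSpace ℝ F]
    (hU : IsOpen U) {f : Ev n → F} (hf : ContDiffOn ℝ ∞ f U)
    {x : Ev n} (hx : x ∈ U) : DifferentiableAt ℝ f x :=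
  (hf.contDiffAt (hU.mem_nhds hx)).differentiableAt (by simp)

lemma sOn_fderiv (hU : IsOpen U) {f : Ev n → Cl n} (hf : ContDiffOn ℝ ∞ f U) :
    ContDiffOn ℝ ∞ (fun x => fderiv ℝ f x) U :=
  hf.fderiv_of_isOpen hU (by simp)

lemma sOn_pd (hU : IsOpen U) {f : Ev n → Cl n} (hf : ContDiffOn ℝ ∞ f U) (i : Fin n) :
    ContDiffOn ℝ ∞ (fun x => pd n i f x) U := by
  have h : ContDiffOn ℝ ∞
      ((fun A : Ev n →L[ℝ] Cl n => A (EuclideanSpace.single i 1)) ∘ fun x => fderiv ℝ f x) U :=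
    ((ContinuousLinearMap.apply ℝ (Cl n) (EuclideanSpace.single i 1)).contDiff).comp_contDiffOn
      (sOn_fderiv hU hf)
  exact h.congr (fun x _ => rfl)

lemma sOn_dirac (hU : IsOpen U) {f : Ev n → Cl n} (hf : ContDiffOn ℝ ∞ f U) :
    ContDiffOn ℝ ∞ (Dirac n f) U := by
  unfold Dirac
  refine ContDiffOn.sum fun i _ => ?_
  exact ((mulL n (eCl n i)).contDiff).comp_contDiffOn (sOn_pd hU hf i)

lemma sOn_eu (hU : IsOpen U) {f : Ev n → Cl n} (hf : ContDiffOn ℝ ∞ f U) :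
    ContDiffOn ℝ ∞ (Eu n f) U := by
  unfold Eu
  refine ContDiffOn.sum fun i _ => ContDiffOn.fun_smul ?_ (sOn_pd hU hf i)
  exact ((EuclideanSpace.proj (𝕜 := ℝ) (i : Fin n)).contDiff).contDiffOn

lemma sOn_toCl : ContDiffOn ℝ ∞ (fun z : Ev n => toCl n z) U :=
  ((toClL n).contDiff).contDiffOn

lemma sOn_smul (c : ℝ) {f : Ev n → Cl n} (hf : ContDiffOn ℝ ∞ f U) :
    ContDiffOn ℝ ∞ (fun z => c • f z) U :=
  hf.const_smul c

end Smooth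

section Algebra

variable {n : ℕ}

lemma km_Qn_apply (x : Ev n) : Qn n x = -(inner ℝ x x : ℝ) := rfl

lemma km_e_mul_e (i : Fin n) : eCl n i * eCl n i = -1 := by
  unfold eCl toCl
  rw [CliffordAlgebra.ι_sq_scalar]
  have h1 : Qn n (EuclideanSpace.single i (1:ℝ)) = -1 := by
    rw [km_Qn_apply]
    norm_num [EuclideanSpace.inner_single_left, EuclideanSpace.single_apply]
  rw [h1, map_neg, map_one]

lemma km_e_mul_v (i : Fin n) (x : Ev n) :
    eCl n i * toCl n x = -(toCl n x * eCl n i) - (2 * x i) • (1 : Cl n) := by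
  have h := CliffordAlgebra.ι_mul_ι_add_swap (Q := Qn n) (EuclideanSpace.single i 1) x
  have hpolar : QuadraticMap.polar (Qn n) (EuclideanSpace.single i 1) x = -(2 * x i) := by
    unfold QuadraticMap.polar
    rw [km_Qn_apply, km_Qn_apply, km_Qn_apply]
    rw [real_inner_add_add_self]
    rw [EuclideanSpace.inner_single_left]
    norm_num [EuclideanSpace.inner_single_left, EuclideanSpace.single_apply]
    ring
  rw [hpolar] at h
  have h2 : eCl n i * toCl n x + toCl n x * eCl n i = (-(2 * x i)) • (1 : Cl n) := by
    rw [Algebra.algebraMap_eq_smul_one] at h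
    exact h
  have := eq_sub_of_add_eq h2
  rw [this, neg_smul]
  abel

end Algebra

section Master

variable {n : ℕ}

lemma pd_toCl (i : Fin n) (x : Ev n) :
    pd n i (fun z : Ev n => toCl n z) x = eCl n i :=
  pd_clm (toClL n) i x

lemma dirac_vmul {h : Ev n → Cl n} {x : Ev n} (hh : DifferentiableAt ℝ h x) :
    Dirac n (fun z => toCl n z * h z) x
      = -((n : ℝ) • h x) - (2:ℝ) • Eu n h x - toCl n x * Dirac n h x := by
  have hV : DifferentiableAt ℝ (fun z : Ev n => toCl n z) x := (toClL n).differentiableAt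
  have key : ∀ i, pd n i (fun z => toCl n z * h z) x
      = eCl n i * h x + toCl n x * pd n i h x := by
    intro i
    rw [pd_mul hV hh, pd_toCl]
  have e1 : ∑ i : Fin n, eCl n i * eCl n i * h x = -((n : ℝ) • h x) := by
    simp only [km_e_mul_e, neg_one_mul, Finset.sum_const, Finset.card_univ, Fintype.card_fin,
      smul_neg, ← Nat.cast_smul_eq_nsmul (R := ℝ)]
  have e2 : ∑ i : Fin n, (2 * x i) • pd n i h x = (2:ℝ) • Eu n h x := by
    unfold Eu
    rw [Finset.smul_sum]
    exact Finset.sum_congr rfl fun i _ => by rw [smul_smul]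
  calc Dirac n (fun z => toCl n z * h z) x
      = ∑ i, eCl n i * pd n i (fun z => toCl n z * h z) x := rfl
    _ = ∑ i, (eCl n i * eCl n i * h x + eCl n i * (toCl n x * pd n i h x)) := by
        refine Finset.sum_congr rfl fun i _ => ?_
        rw [key i, mul_add, mul_assoc]
    _ = (∑ i : Fin n, eCl n i * eCl n i * h x)
        + ∑ i, (-(toCl n x * (eCl n i * pd n i h x)) - (2 * x i) • pd n i h x) := by
        rw [Finset.sum_add_distrib]
        congr 1
        refine Finset.sum_congr rfl fun i _ => ?_
        rw [← mul_assoc, km_e_mul_v, sub_mul, neg_mul, mul_assoc, smul_mul_assoc, one_mul]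
    _ = -((n : ℝ) • h x) + (-(toCl n x * Dirac n h x) - (2:ℝ) • Eu n h x) := by
        have e3 : ∑ i : Fin n, -(toCl n x * (eCl n i * pd n i h x))
            = -(toCl n x * Dirac n h x) := by
          rw [Finset.sum_neg_distrib, ← Finset.mul_sum]
          rfl
        rw [e1, Finset.sum_sub_distrib, e2, e3]
    _ = -((n : ℝ) • h x) - (2:ℝ) • Eu n h x - toCl n x * Dirac n h x := by abel

end Master

section Euler

variable {n : ℕ} {U : Set (Ev n)}

lemma pd_pd_symm (hU : IsOpen U) {h : Ev n → Cl n} (hh : ContDiffOn ℝ ∞ h U)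
    {x : Ev n} (hx : x ∈ U) (i j : Fin n) :
    pd n j (fun y => pd n i h y) x = pd n i (fun y => pd n j h y) x := by
  have hsym : IsSymmSndFDerivAt ℝ h x :=
    (hh.contDiffAt (hU.mem_nhds hx)).isSymmSndFDerivAt (by
      rw [minSmoothness_of_isRCLikeNormedField]
      rw [show ((2:WithTop ℕ∞)) = ((2:ℕ∞) : WithTop ℕ∞) from rfl]
      exact WithTop.coe_le_coe.mpr le_top)
  have hfd : DifferentiableAt ℝ (fun y => fderiv ℝ h y) x :=
    sOn_diffAt hU (sOn_fderiv hU hh) hx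
  have key : ∀ a b : Fin n, pd n b (fun y => pd n a h y) x
      = fderiv ℝ (fderiv ℝ h) x (EuclideanSpace.single b 1) (EuclideanSpace.single a 1) := by
    intro a b
    unfold pd
    rw [fderiv_clm_apply hfd (differentiableAt_const _)]
    simp
  rw [key i j, key j i, hsym.eq]

lemma pd_dirac (hU : IsOpen U) {h : Ev n → Cl n} (hh : ContDiffOn ℝ ∞ h U)
    {x : Ev n} (hx : x ∈ U) (i : Fin n) :
    pd n i (Dirac n h) x = ∑ j, eCl n j * pd n i (fun y => pd n j h y) x := by
  have hd : ∀ j : Fin n, DifferentiableAt ℝ (fun y => eCl n j * pd n j h y) x := fun j =>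
    km_diffAt_mul (differentiableAt_const _) (sOn_diffAt hU (sOn_pd hU hh j) hx)
  unfold Dirac
  rw [pd_sum Finset.univ (fun j _ => hd j) i]
  refine Finset.sum_congr rfl fun j _ => ?_
  exact pd_clm_comp (mulL n (eCl n j)) (sOn_diffAt hU (sOn_pd hU hh j) hx) i

lemma dirac_eu (hU : IsOpen U) {h : Ev n → Cl n} (hh : ContDiffOn ℝ ∞ h U)
    {x : Ev n} (hx : x ∈ U) :
    Dirac n (Eu n h) x = Eu n (Dirac n h) x + Dirac n h x := by
  have hdp : ∀ j : Fin n, DifferentiableAt ℝ (fun y => pd n j h y) x :=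
    fun j => sOn_diffAt hU (sOn_pd hU hh j) hx
  have hstep : ∀ j : Fin n, pd n j (Eu n h) x
      = pd n j h x + ∑ i, x i • pd n j (fun y => pd n i h y) x := by
    intro j
    unfold Eu
    rw [pd_sum (f := fun i z => z i • pd n i h z) Finset.univ (fun i _ => by
      exact DifferentiableAt.smul
        ((EuclideanSpace.proj (𝕜 := ℝ) i).differentiableAt) (hdp i)) j]
    rw [Finset.sum_congr rfl fun i _ => pd_coord_smul i (hdp i) j]
    rw [Finset.sum_add_distrib]
    congr 1
    simp [EuclideanSpace.single_apply]
  calc Dirac n (Eu n h) x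
      = ∑ j, eCl n j * pd n j (Eu n h) x := rfl
    _ = ∑ j, (eCl n j * pd n j h x
          + ∑ i, x i • (eCl n j * pd n j (fun y => pd n i h y) x)) := by
        refine Finset.sum_congr rfl fun j _ => ?_
        rw [hstep j, mul_add, Finset.mul_sum]
        congr 1
        exact Finset.sum_congr rfl fun i _ => mul_smul_comm _ _ _
    _ = Dirac n h x + ∑ j, ∑ i, x i • (eCl n j * pd n j (fun y => pd n i h y) x) := by
        rw [Finset.sum_add_distrib]
        rfl
    _ = Dirac n h x + ∑ i, x i • (∑ j, eCl n j * pd n i (fun y => pd n j h y) x) := by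
        congr 1
        rw [Finset.sum_comm]
        refine Finset.sum_congr rfl fun i _ => ?_
        rw [Finset.smul_sum]
        exact Finset.sum_congr rfl fun j _ => by rw [pd_pd_symm hU hh hx i j]
    _ = Dirac n h x + ∑ i, x i • pd n i (Dirac n h) x := by
        congr 1
        exact Finset.sum_congr rfl fun i _ => by rw [← pd_dirac hU hh hx i]
    _ = Eu n (Dirac n h) x + Dirac n h x := by
        rw [add_comm]
        rfl

end Euler

section Iterates

variable {n : ℕ} {U : Set (Ev n)}

lemma dirac_congr (hU : IsOpen U) {f g : Ev n → Cl n} (h : ∀ y ∈ U, f y = g y)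
    {x : Ev n} (hx : x ∈ U) : Dirac n f x = Dirac n g x := by
  unfold Dirac
  exact Finset.sum_congr rfl fun i _ => by rw [pd_congr hU h hx i]

lemma iter_congr (hU : IsOpen U) (m : ℕ) :
    ∀ {f g : Ev n → Cl n}, (∀ y ∈ U, f y = g y) →
      ∀ x ∈ U, (Dirac n)^[m] f x = (Dirac n)^[m] g x := by
  induction m with
  | zero => intro f g h x hx; simpa using h x hx
  | succ m ih =>
    intro f g h x hx
    rw [Function.iterate_succ_apply, Function.iterate_succ_apply]
    exact ih (fun y hy => dirac_congr hU h hy) x hx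

lemma dirac_zero_fn : Dirac n (fun _ => (0 : Cl n)) = fun _ => 0 := by
  funext x
  unfold Dirac
  simp [pd_const]

lemma iter_zero (hU : IsOpen U) {f : Ev n → Cl n} (h : ∀ y ∈ U, f y = 0) (m : ℕ)
    {x : Ev n} (hx : x ∈ U) : (Dirac n)^[m] f x = 0 := by
  have h1 := iter_congr hU m (g := fun _ => (0:Cl n)) h x hx
  rw [h1, Function.iterate_fixed dirac_zero_fn]

lemma dirac_add_pt {f g : Ev n → Cl n} {x : Ev n} (hf : DifferentiableAt ℝ f x)
    (hg : DifferentiableAt ℝ g x) :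
    Dirac n (fun z => f z + g z) x = Dirac n f x + Dirac n g x := by
  unfold Dirac
  rw [← Finset.sum_add_distrib]
  exact Finset.sum_congr rfl fun i _ => by rw [pd_add hf hg i, mul_add]

lemma dirac_smul_pt (c : ℝ) {f : Ev n → Cl n} {x : Ev n} (hf : DifferentiableAt ℝ f x) :
    Dirac n (fun z => c • f z) x = c • Dirac n f x := by
  unfold Dirac
  rw [Finset.smul_sum]
  exact Finset.sum_congr rfl fun i _ => by rw [pd_smul c hf i, mul_smul_comm]

lemma iter_add (hU : IsOpen U) (m : ℕ) :
    ∀ {f g : Ev n → Cl n}, ContDiffOn ℝ ∞ f U → ContDiffOn ℝ ∞ g U →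
      ∀ x ∈ U, (Dirac n)^[m] (fun z => f z + g z) x
        = (Dirac n)^[m] f x + (Dirac n)^[m] g x := by
  induction m with
  | zero => intro f g _ _ x _; simp
  | succ m ih =>
    intro f g hf hg x hx
    rw [Function.iterate_succ_apply, Function.iterate_succ_apply,
      Function.iterate_succ_apply]
    rw [iter_congr hU m (g := fun z => Dirac n f z + Dirac n g z)
      (fun y hy => dirac_add_pt (sOn_diffAt hU hf hy) (sOn_diffAt hU hg hy)) x hx]
    exact ih (sOn_dirac hU hf) (sOn_dirac hU hg) x hx

lemma iter_smul (hU : IsOpen U) (m : ℕ) (c : ℝ) :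
    ∀ {f : Ev n → Cl n}, ContDiffOn ℝ ∞ f U →
      ∀ x ∈ U, (Dirac n)^[m] (fun z => c • f z) x = c • (Dirac n)^[m] f x := by
  induction m with
  | zero => intro f _ x _; simp
  | succ m ih =>
    intro f hf x hx
    rw [Function.iterate_succ_apply, Function.iterate_succ_apply]
    rw [iter_congr hU m (g := fun z => c • Dirac n f z)
      (fun y hy => dirac_smul_pt c (sOn_diffAt hU hf hy)) x hx]
    exact ih (sOn_dirac hU hf) x hx

lemma euler_zero (hU : IsOpen U) (m : ℕ) :
    ∀ {h : Ev n → Cl n}, ContDiffOn ℝ ∞ h U → (∀ y ∈ U, (Dirac n)^[m] h y = 0) →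
      ∀ x ∈ U, (Dirac n)^[m] (Eu n h) x = 0 := by
  induction m with
  | zero =>
    intro h _ h0 x hx
    have : ∀ i : Fin n, pd n i h x = 0 := fun i => by
      rw [pd_congr hU (g := fun _ => (0:Cl n)) (by simpa using h0) hx i, pd_const]
    unfold Eu
    simp [this]
  | succ m ih =>
    intro h hh h0 x hx
    rw [Function.iterate_succ_apply]
    rw [iter_congr hU m (g := fun z => Eu n (Dirac n h) z + Dirac n h z)
      (fun y hy => dirac_eu hU hh hy) x hx]
    rw [iter_add hU m (sOn_eu hU (sOn_dirac hU hh)) (sOn_dirac hU hh) x hx]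
    have h1 : ∀ y ∈ U, (Dirac n)^[m] (Dirac n h) y = 0 := fun y hy => by
      rw [← Function.iterate_succ_apply]; exact h0 y hy
    rw [ih (sOn_dirac hU hh) h1 x hx, h1 x hx, add_zero]

lemma km_claim (hU : IsOpen U) (k : ℕ) :
    ∀ {h : Ev n → Cl n}, ContDiffOn ℝ ∞ h U → (∀ y ∈ U, (Dirac n)^[k] h y = 0) →
      ∀ x ∈ U, (Dirac n)^[k+1] (fun z => toCl n z * h z) x = 0 := by
  induction k with
  | zero =>
    intro h _ h0 x hx
    exact iter_zero hU (fun y hy => by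
      rw [show h y = 0 by simpa using h0 y hy, mul_zero]) 1 hx
  | succ k ih =>
    intro h hh h0 x hx
    rw [Function.iterate_succ_apply]
    have hVh : ∀ y ∈ U, Dirac n (fun z => toCl n z * h z) y
        = (-(n:ℝ)) • h y + ((-2:ℝ) • Eu n h y
            + (-1:ℝ) • (toCl n y * Dirac n h y)) := by
      intro y hy
      rw [dirac_vmul (sOn_diffAt hU hh hy)]
      simp only [neg_smul, one_smul, neg_one_smul]
      abel
    rw [iter_congr hU (k+1) hVh x hx]
    have hsm1 : ContDiffOn ℝ ∞ (fun z => (-(n:ℝ)) • h z) U := sOn_smul _ hh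
    have hsm2 : ContDiffOn ℝ ∞ (fun z => (-2:ℝ) • Eu n h z) U := sOn_smul _ (sOn_eu hU hh)
    have hsm3 : ContDiffOn ℝ ∞ (fun z => toCl n z * Dirac n h z) U :=
      km_contDiffOn_mul sOn_toCl (sOn_dirac hU hh)
    have hsm3' : ContDiffOn ℝ ∞ (fun z => (-1:ℝ) • (toCl n z * Dirac n h z)) U :=
      sOn_smul _ hsm3
    rw [iter_add hU (k+1) hsm1 (hsm2.add hsm3') x hx]
    rw [iter_add hU (k+1) hsm2 hsm3' x hx]
    rw [iter_smul hU (k+1) _ hh x hx]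
    rw [iter_smul hU (k+1) _ (sOn_eu hU hh) x hx]
    rw [iter_smul hU (k+1) _ hsm3 x hx]
    have hz1 : (Dirac n)^[k+1] h x = 0 := h0 x hx
    have hz2 : (Dirac n)^[k+1] (Eu n h) x = 0 := euler_zero hU (k+1) hh h0 x hx
    have hz3 : (Dirac n)^[k+1] (fun z => toCl n z * Dirac n h z) x = 0 := by
      refine ih (sOn_dirac hU hh) (fun y hy => ?_) x hx
      rw [← Function.iterate_succ_apply]; exact h0 y hy
    rw [hz1, hz2, hz3]
    simp

end Iterates

section Final

variable {n : ℕ} {U : Set (Ev n)}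

lemma sOn_pow (m : ℕ) : ContDiffOn ℝ ∞ (fun z : Ev n => (toCl n z) ^ m) U := by
  induction m with
  | zero => simpa using contDiffOn_const
  | succ m ih =>
    have : ContDiffOn ℝ ∞ (fun z : Ev n => (toCl n z) ^ m * toCl n z) U :=
      km_contDiffOn_mul ih sOn_toCl
    refine this.congr fun z _ => ?_
    rw [pow_succ]

end Final

end

open scoped ContDiff

/-- **Construction of `k`-monogenic functions**: if `f` is left monogenic then
`D^k (x^{k-1} f(x)) = 0`. -/
theorem k_monogenic_construction (n : ℕ) (hn : 2 ≤ n) (U : Set (Ev n)) (hU : IsOpen U)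
    (f : Ev n → Cl n) (hsm : ContDiffOn ℝ (⊤ : ℕ∞) f U) (hmono : ∀ x ∈ U, Dirac n f x = 0)
    (k : ℕ) (hk : 1 ≤ k) :
    ∀ x ∈ U, (Dirac n)^[k] (fun z => (toCl n z) ^ (k - 1) * f z) x = 0 := by
  have hsm' : ContDiffOn ℝ ∞ f U := hsm.of_le (by simp)
  have main : ∀ j : ℕ, ∀ x ∈ U, (Dirac n)^[j+1] (fun z => (toCl n z) ^ j * f z) x = 0 := by
    intro j
    induction j with
    | zero =>
      intro x hx
      have heq : (fun z : Ev n => (toCl n z) ^ 0 * f z) = f := by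
        funext z; simp
      rw [heq]
      simpa using hmono x hx
    | succ j ih =>
      have hsmj : ContDiffOn ℝ ∞ (fun z => (toCl n z) ^ j * f z) U :=
        km_contDiffOn_mul (sOn_pow j) hsm'
      have hcl := km_claim hU (j+1) hsmj ih
      intro x hx
      have heq : (fun z => (toCl n z) ^ (j+1) * f z)
          = fun z => toCl n z * ((toCl n z) ^ j * f z) := by
        funext z; rw [pow_succ', mul_assoc]
      rw [heq]
      exact hcl x hx
  intro x hx
  obtain ⟨k', rfl⟩ : ∃ k', k = k' + 1 := ⟨k - 1, (Nat.succ_pred_eq_of_pos hk).symm⟩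
  simpa using main k' x hx

end
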